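/- In the setting of the stopping-cube construction: let E be a Banach lattice, μ a locally finite Borel measure on ℝ^d, D a finite collection of dyadic cubes, f: ℝ^d → E positive and locally integrable, K := ‖M̃^μ_D‖_{L^1(μ;E)→L^{1,∞}(μ;E)} < ∞, and let S be the stopping family generated by iterating, from the maximal cubes of D, the choice of maximal cubes S' ⊊ S in D with ‖sup_{Q ∈ D, S' ⊆ Q ⊆ S} ⟨f⟩^μ_Q‖_E > 2K ⟨‖f‖_E⟩^μ_S; for Q ∈ D let π_S(Q) denote the minimal cube of S containing Q. Then for every S ∈ S and every x ∈ ℝ^d, ‖sup_{Q ∈ D, π_S(Q) = S} ⟨f⟩^μ_Q 1_Q(x)‖_E ≤ 2K ⟨‖f‖_E⟩^μ_S 1_S(x). -/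

import Mathlib

open MeasureTheory ENNReal Set

attribute [local instance] Classical.propDecidable

/-- A dyadic cube in `ℝ^d`, given by a generation `k : ℤ` and a position `m : Fin d → ℤ`;
its underlying set is `∏_i [2^k m i, 2^k (m i + 1))`. -/
structure DyadicCube (d : ℕ) where
  k : ℤ
  m : Fin d → ℤ
deriving DecidableEq

/-- The underlying set of a dyadic cube. -/
def DyadicCube.set {d : ℕ} (Q : DyadicCube d) : Set (Fin d → ℝ) :=
  {x | ∀ i, (2 : ℝ) ^ Q.k * Q.m i ≤ x i ∧ x i < (2 : ℝ) ^ Q.k * (Q.m i + 1)}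

/-- A (non-dyadic) axis-parallel cube in `ℝ^d`, given by its corner and side length. -/
structure Cube (d : ℕ) where
  c : Fin d → ℝ
  len : ℝ
  len_pos : 0 < len

/-- The underlying set of an axis-parallel cube. -/
def Cube.set {d : ℕ} (Q : Cube d) : Set (Fin d → ℝ) :=
  {x | ∀ i, Q.c i ≤ x i ∧ x i < Q.c i + Q.len}

/-- The average `⟨f⟩^μ_A = (1/μ(A)) ∫_A f dμ` of a vector-valued function. -/
noncomputable def avg {d : ℕ} {E : Type*} [NormedAddCommGroup E] [NormedSpace ℝ E]
    (μ : Measure (Fin d → ℝ)) (A : Set (Fin d → ℝ)) (f : (Fin d → ℝ) → E) : E :=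
  (μ A).toReal⁻¹ • ∫ x in A, f x ∂μ

/-- The dyadic lattice Hardy–Littlewood maximal operator
`M̃^μ_D f (x) = sup_{Q ∈ D} ⟨|f|⟩^μ_Q 1_Q(x)` (a lattice supremum of finitely many
positive elements, realized as a fold of `⊔` with base point `0`). -/
noncomputable def dyadicMaximal {d : ℕ} {E : Type*} [NormedAddCommGroup E] [Lattice E] [IsOrderedAddMonoid E] [HasSolidNorm E]
    [NormedSpace ℝ E] (μ : Measure (Fin d → ℝ)) (D : Finset (DyadicCube d))
    (f : (Fin d → ℝ) → E) (x : Fin d → ℝ) : E :=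
  D.fold (· ⊔ ·) 0 fun Q => Set.indicator Q.set (fun _ => avg μ Q.set fun y => |f y|) x

/-- A collection of dyadic cubes is sparse (w.r.t. `μ`): each `Q` in the collection carries a
measurable subset `E_Q ⊆ Q` with `μ(Q) ≤ 2 μ(E_Q)`, the subsets being pairwise disjoint. -/
def IsSparse {d : ℕ} (μ : Measure (Fin d → ℝ)) (S : Finset (DyadicCube d)) : Prop :=
  ∃ ES : DyadicCube d → Set (Fin d → ℝ),
    (∀ Q ∈ S, ES Q ⊆ Q.set ∧ MeasurableSet (ES Q) ∧ μ Q.set ≤ 2 * μ (ES Q)) ∧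
    (S : Set (DyadicCube d)).Pairwise fun Q Q' => Disjoint (ES Q) (ES Q')

/-- The sparse operator `A^μ_{q,S} f (x) = (∑_{Q ∈ S} ⟨|f|⟩_Q^q 1_Q(x))^{1/q}` acting on
scalar-valued functions. -/
noncomputable def sparseOp {d : ℕ} (μ : Measure (Fin d → ℝ)) (q : ℝ)
    (S : Finset (DyadicCube d)) (f : (Fin d → ℝ) → ℝ) (x : Fin d → ℝ) : ℝ :=
  (∑ Q ∈ S, Set.indicator Q.set (fun _ => avg μ Q.set (fun y => |f y|) ^ q) x) ^ (1 / q)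

/-- `q`-convexity of a Banach lattice with constant `C`:
`‖(∑ |e k|^q)^{1/q}‖ ≤ C (∑ ‖e k‖^q)^{1/q}`. The Krivine element `(∑ |e k|^q)^{1/q}` is
characterized as the least upper bound of all combinations `∑ a k • |e k|` where the
nonnegative coefficients `a` lie in the unit ball of the norm dual to the `ℓ^q`-norm. -/
def IsQConvexWith (E : Type*) [NormedAddCommGroup E] [Lattice E] [IsOrderedAddMonoid E] [HasSolidNorm E] [NormedSpace ℝ E]
    (q C : ℝ) : Prop :=
  ∀ (n : ℕ) (e : Fin n → E) (s : E),
    IsLUB {x : E | ∃ a : Fin n → ℝ, (∀ k, 0 ≤ a k) ∧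
        (∀ t : Fin n → ℝ, (∀ k, 0 ≤ t k) → ∑ k, a k * t k ≤ (∑ k, t k ^ q) ^ (1 / q)) ∧
        x = ∑ k, a k • |e k|} s →
    ‖s‖ ≤ C * (∑ k, ‖e k‖ ^ q) ^ (1 / q)

/-- The Hardy–Littlewood property of a Banach lattice `E`: for some `p ∈ (1,∞)` the dyadic
lattice maximal operators (w.r.t. Lebesgue measure) are bounded on `L^p(dx; E)` uniformly in
the finite collection of dyadic cubes. -/
def HasHLProperty (d : ℕ) (E : Type*) [NormedAddCommGroup E] [Lattice E] [IsOrderedAddMonoid E] [HasSolidNorm E] [NormedSpace ℝ E] : Prop :=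
  ∃ p : ℝ, 1 < p ∧ ∃ C : ℝ, ∀ (D : Finset (DyadicCube d)) (f : (Fin d → ℝ) → E),
    MemLp f (ENNReal.ofReal p) volume →
    eLpNorm (dyadicMaximal volume D f) (ENNReal.ofReal p) volume ≤
      ENNReal.ofReal C * eLpNorm f (ENNReal.ofReal p) volume

/-- Order continuity of a Banach lattice: every downward directed set with infimum `0`
contains elements of arbitrarily small norm cofinally (i.e. the corresponding decreasing net
converges to `0` in norm). -/
def IsOrderContinuous (E : Type*) [NormedAddCommGroup E] [Lattice E] [IsOrderedAddMonoid E] [HasSolidNorm E] : Prop :=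
  ∀ A : Set E, A.Nonempty → DirectedOn (· ≥ ·) A → IsGLB A 0 →
    ∀ ε : ℝ, 0 < ε → ∃ a ∈ A, ∀ b ∈ A, b ≤ a → ‖b‖ < ε
/-- The Lebesgue average of `g` over `A`, valued in `ℝ≥0∞`. -/
noncomputable def scalarCubeAvg {d : ℕ} (A : Set (Fin d → ℝ)) (g : (Fin d → ℝ) → ℝ) : ℝ≥0∞ :=
  (volume A)⁻¹ * ∫⁻ x in A, ENNReal.ofReal (g x)

/-- The scalar (non-dyadic) Hardy–Littlewood maximal function, valued in `ℝ≥0∞`. -/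
noncomputable def scalarMaximal {d : ℕ} (g : (Fin d → ℝ) → ℝ) (x : Fin d → ℝ) : ℝ≥0∞ :=
  ⨆ (Q : Cube d) (_ : x ∈ Q.set), scalarCubeAvg Q.set fun y => |g y|

/-- The Muckenhoupt `A_p`-characteristic `[w]_{A_p} = sup_Q ⟨w⟩_Q ⟨w^{-1/(p-1)}⟩_Q^{p-1}`. -/
noncomputable def ApConst (d : ℕ) (p : ℝ) (w : (Fin d → ℝ) → ℝ) : ℝ≥0∞ :=
  ⨆ Q : Cube d,
    scalarCubeAvg Q.set w * scalarCubeAvg Q.set (fun x => w x ^ (-(1 / (p - 1)))) ^ (p - 1)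

/-- The Fujii–Wilson `A_∞`-characteristic `[w]_{A_∞} = sup_Q (∫_Q M(w 1_Q))/(∫_Q w)`. -/
noncomputable def AinfConst (d : ℕ) (w : (Fin d → ℝ) → ℝ) : ℝ≥0∞ :=
  ⨆ Q : Cube d, (∫⁻ x in Q.set, scalarMaximal (Q.set.indicator w) x) /
    ∫⁻ x in Q.set, ENNReal.ofReal (w x)

/-- The `A_1`-characteristic `[w]_{A_1} = sup_Q ⟨w⟩_Q ‖w⁻¹‖_{L^∞(Q)}`. -/
noncomputable def A1Const (d : ℕ) (w : (Fin d → ℝ) → ℝ) : ℝ≥0∞ :=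
  ⨆ Q : Cube d, scalarCubeAvg Q.set w *
    essSup (fun x => ENNReal.ofReal (w x)⁻¹) (volume.restrict Q.set)

/-- The measure `w dx` associated with a weight `w`. -/
noncomputable def wMeasure {d : ℕ} (w : (Fin d → ℝ) → ℝ) : Measure (Fin d → ℝ) :=
  volume.withDensity fun x => ENNReal.ofReal (w x)

/-- `g` is (a representative of) the non-dyadic lattice Hardy–Littlewood maximal function
`M̃f = sup_Q ⟨|f|⟩_Q 1_Q` (w.r.t. Lebesgue measure): `g` is strongly measurable and is the
least upper bound, in the almost-everywhere order of `L^0(dx; E)`, of the family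
`x ↦ ⟨|f|⟩_Q 1_Q(x)` indexed by all axis-parallel cubes `Q`. -/
def IsLatticeMaximalFn {d : ℕ} {E : Type*} [NormedAddCommGroup E] [Lattice E] [IsOrderedAddMonoid E] [HasSolidNorm E] [NormedSpace ℝ E]
    (f g : (Fin d → ℝ) → E) : Prop :=
  AEStronglyMeasurable g (volume : Measure (Fin d → ℝ)) ∧
  (∀ Q : Cube d, ∀ᵐ x ∂(volume : Measure (Fin d → ℝ)),
    Set.indicator Q.set (fun _ => avg volume Q.set fun y => |f y|) x ≤ g x) ∧
  ∀ h : (Fin d → ℝ) → E, AEStronglyMeasurable h (volume : Measure (Fin d → ℝ)) →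
    (∀ Q : Cube d, ∀ᵐ x ∂(volume : Measure (Fin d → ℝ)),
      Set.indicator Q.set (fun _ => avg volume Q.set fun y => |f y|) x ≤ h x) →
    ∀ᵐ x ∂(volume : Measure (Fin d → ℝ)), g x ≤ h x

/-- The lattice supremum `sup_{Q ∈ D, P Q} ⟨f⟩^μ_Q` (fold of `⊔` with base point `0`). -/
noncomputable def supAvgOver {d : ℕ} {E : Type*} [NormedAddCommGroup E] [Lattice E] [IsOrderedAddMonoid E] [HasSolidNorm E]
    [NormedSpace ℝ E] (μ : Measure (Fin d → ℝ)) (D : Finset (DyadicCube d))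
    (f : (Fin d → ℝ) → E) (P : DyadicCube d → Prop) : E :=
  (D.filter P).fold (· ⊔ ·) 0 fun Q => avg μ Q.set f

/-- The Muckenhoupt–Wheeden type stopping condition:
`‖sup_{Q ∈ D, S' ⊆ Q ⊆ S} ⟨f⟩^μ_Q‖ > 2 K ⟨‖f‖⟩^μ_S`. -/
def StopCond {d : ℕ} {E : Type*} [NormedAddCommGroup E] [Lattice E] [IsOrderedAddMonoid E] [HasSolidNorm E] [NormedSpace ℝ E]
    (μ : Measure (Fin d → ℝ)) (D : Finset (DyadicCube d)) (f : (Fin d → ℝ) → E) (K : ℝ)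
    (S' S : DyadicCube d) : Prop :=
  2 * K * avg μ S.set (fun y => ‖f y‖) <
    ‖supAvgOver μ D f fun Q => S'.set ⊆ Q.set ∧ Q.set ⊆ S.set‖

/-- The stopping children of `S`: maximal cubes `S' ∈ D`, `S' ⊊ S`, satisfying the stopping
condition. -/
noncomputable def stopChildren {d : ℕ} {E : Type*} [NormedAddCommGroup E] [Lattice E] [IsOrderedAddMonoid E] [HasSolidNorm E]
    [NormedSpace ℝ E] (μ : Measure (Fin d → ℝ)) (D : Finset (DyadicCube d))
    (f : (Fin d → ℝ) → E) (K : ℝ) (S : DyadicCube d) : Finset (DyadicCube d) :=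
  D.filter fun S' => S'.set ⊂ S.set ∧ StopCond μ D f K S' S ∧
    ∀ S'' ∈ D, S''.set ⊂ S.set → StopCond μ D f K S'' S → S'.set ⊆ S''.set → S'' = S'

/-- The generations of stopping cubes: generation `0` consists of the maximal cubes of `D`,
and generation `k+1` consists of the stopping children of the cubes of generation `k`. -/
noncomputable def stopLayer {d : ℕ} {E : Type*} [NormedAddCommGroup E] [Lattice E] [IsOrderedAddMonoid E] [HasSolidNorm E]
    [NormedSpace ℝ E] (μ : Measure (Fin d → ℝ)) (D : Finset (DyadicCube d))
    (f : (Fin d → ℝ) → E) (K : ℝ) : ℕ → Finset (DyadicCube d)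
  | 0 => D.filter fun Q => ∀ Q' ∈ D, Q.set ⊆ Q'.set → Q'.set ⊆ Q.set
  | k + 1 => (stopLayer μ D f K k).biUnion (stopChildren μ D f K)

/-- The family of stopping cubes `𝒮 = ⋃_k 𝒮_k`. -/
noncomputable def stopFamily {d : ℕ} {E : Type*} [NormedAddCommGroup E] [Lattice E] [IsOrderedAddMonoid E] [HasSolidNorm E]
    [NormedSpace ℝ E] (μ : Measure (Fin d → ℝ)) (D : Finset (DyadicCube d))
    (f : (Fin d → ℝ) → E) (K : ℝ) : Finset (DyadicCube d) :=
  D.filter fun Q => ∃ k, Q ∈ stopLayer μ D f K k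

/-- `S` is the stopping parent of `Q` w.r.t. the family `𝒮`: the minimal cube of `𝒮`
containing `Q`. -/
def IsStopParent {d : ℕ} (𝒮 : Finset (DyadicCube d)) (Q S : DyadicCube d) : Prop :=
  S ∈ 𝒮 ∧ Q.set ⊆ S.set ∧ ∀ S' ∈ 𝒮, Q.set ⊆ S'.set → S.set ⊆ S'.set

/-- The lattice supremum `sup_{Q ∈ D, P Q} ⟨f⟩^μ_Q 1_Q(x)`. -/
noncomputable def supIndAvgOver {d : ℕ} {E : Type*} [NormedAddCommGroup E] [Lattice E] [IsOrderedAddMonoid E] [HasSolidNorm E]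
    [NormedSpace ℝ E] (μ : Measure (Fin d → ℝ)) (D : Finset (DyadicCube d))
    (f : (Fin d → ℝ) → E) (P : DyadicCube d → Prop) (x : Fin d → ℝ) : E :=
  (D.filter P).fold (· ⊔ ·) 0 fun Q => Set.indicator Q.set (fun _ => avg μ Q.set f) x


/-!
Fix `x ∈ S` and let `Q₀` be the smallest cube with stopping parent `S` that contains `x`. Dyadic
cubes are nested or disjoint, so every cube with stopping parent `S` containing `x` lies in the
chain `Q₀ ⊆ Q ⊆ S`, and the supremum at `x` is dominated by the supremum of the averages over that
chain. That supremum is at most `2K ⟨‖f‖⟩_S` because `Q₀` does not satisfy the stopping condition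
relative to `S`: if `Q₀ ⊊ S`, a maximal stopping cube above `Q₀` would be a stopping child of `S`,
contradicting the minimality of the stopping parent; if `Q₀ = S`, the chain consists of copies of
`S` and its supremum is bounded by `⟨‖f‖⟩_S ≤ K ⟨‖f‖⟩_S`, because `K ≥ 1`.
-/

namespace Finset

variable {ι β : Type*} [Lattice β] {s : Finset ι} {f : ι → β} {b c : β}

theorem fold_sup_le_iff : Finset.fold (β := β) (· ⊔ ·) b f s ≤ c ↔ b ≤ c ∧ ∀ i ∈ s, f i ≤ c :=
  fold_op_rel_iff_and (r := fun x y => y ≤ x) sup_le_iff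

theorem init_le_fold_sup : b ≤ Finset.fold (β := β) (· ⊔ ·) b f s :=
  (fold_sup_le_iff.1 le_rfl).1

theorem le_fold_sup {i : ι} (hi : i ∈ s) : f i ≤ Finset.fold (β := β) (· ⊔ ·) b f s :=
  (fold_sup_le_iff.1 le_rfl).2 i hi

end Finset

namespace DyadicCube

variable {d : ℕ}

theorem set_eq_pi (Q : DyadicCube d) :
    Q.set = univ.pi fun i => Ico ((2 : ℝ) ^ Q.k * Q.m i) ((2 : ℝ) ^ Q.k * (Q.m i + 1)) := by
  ext x
  simp [DyadicCube.set]

theorem corner_mem_set (Q : DyadicCube d) : (fun i => (2 : ℝ) ^ Q.k * Q.m i) ∈ Q.set :=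
  fun _ => ⟨le_rfl, mul_lt_mul_of_pos_left (lt_add_one _) (zpow_pos two_pos _)⟩

theorem mem_set_iff_floor {Q : DyadicCube d} {x : Fin d → ℝ} :
    x ∈ Q.set ↔ ∀ i, ⌊x i / 2 ^ Q.k⌋ = Q.m i := by
  have h : (0 : ℝ) < 2 ^ Q.k := zpow_pos two_pos _
  refine forall_congr' fun i => ?_
  rw [Int.floor_eq_iff, le_div_iff₀ h, div_lt_iff₀ h, mul_comm, mul_comm (_ + 1 : ℝ)]

/-- Dyadic cubes are nested or disjoint: the ancestor of `P` in generation `Q.k` is read off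
from `⌊x / 2 ^ Q.k⌋ = ⌊⌊x / 2 ^ P.k⌋ / 2 ^ (Q.k - P.k)⌋` for any `x ∈ P`. -/
theorem set_subset_of_k_le {P Q : DyadicCube d} {x : Fin d → ℝ} (hxP : x ∈ P.set)
    (hxQ : x ∈ Q.set) (hk : P.k ≤ Q.k) : P.set ⊆ Q.set := by
  obtain ⟨r, hr⟩ := Int.eq_ofNat_of_zero_le (sub_nonneg.2 hk)
  have hQk : (2 : ℝ) ^ Q.k = 2 ^ P.k * ((2 ^ r : ℕ) : ℝ) := by
    rw [Nat.cast_pow, Nat.cast_ofNat, ← zpow_natCast, ← zpow_add₀ two_ne_zero, ← hr,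
      add_sub_cancel]
  have ancestor : ∀ y ∈ P.set, ∀ i, ⌊y i / 2 ^ Q.k⌋ = P.m i / 2 ^ r := fun y hy i => by
    rw [hQk, ← div_div, Int.floor_div_natCast, mem_set_iff_floor.1 hy i, Nat.cast_pow,
      Nat.cast_ofNat]
  intro y hy
  rw [mem_set_iff_floor] at hxQ ⊢
  exact fun i => (ancestor y hy i).trans ((ancestor x hxP i).symm.trans (hxQ i))

theorem set_injective (hd : 1 ≤ d) : Function.Injective (DyadicCube.set (d := d)) := by
  intro P Q h
  have edge : ∀ i, (2 : ℝ) ^ P.k * P.m i = 2 ^ Q.k * Q.m i ∧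
      (2 : ℝ) ^ P.k * (P.m i + 1) = 2 ^ Q.k * (Q.m i + 1) := fun i => by
    have := congrArg (Function.eval i '' ·) h
    simp only [set_eq_pi] at this
    rwa [eval_image_univ_pi ⟨_, P.set_eq_pi ▸ P.corner_mem_set⟩,
      eval_image_univ_pi ⟨_, Q.set_eq_pi ▸ Q.corner_mem_set⟩,
      Ico_eq_Ico_iff (Or.inl (mul_lt_mul_of_pos_left (lt_add_one _) (zpow_pos two_pos _)))] at this
  have hk : P.k = Q.k := by
    obtain ⟨h₁, h₂⟩ := edge ⟨0, hd⟩
    exact zpow_right_injective₀ (by norm_num : (0 : ℝ) < 2) (by norm_num)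
      (by linear_combination h₂ - h₁)
  have hm : P.m = Q.m := funext fun i => by
    have := (edge i).1
    rw [hk] at this
    exact_mod_cast mul_left_cancel₀ (zpow_pos two_pos Q.k).ne' this
  cases P; cases Q
  simp_all

theorem measurableSet_set (Q : DyadicCube d) : MeasurableSet Q.set := by
  rw [set_eq_pi]
  exact MeasurableSet.univ_pi fun _ => measurableSet_Ico

theorem measure_set_lt_top (Q : DyadicCube d) (μ : Measure (Fin d → ℝ))
    [IsLocallyFiniteMeasure μ] : μ Q.set < ⊤ :=
  (measure_mono fun _ hx => ⟨fun i => (hx i).1, fun i => (hx i).2.le⟩ :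
    μ Q.set ≤ μ (Icc _ _)).trans_lt isCompact_Icc.measure_lt_top

end DyadicCube

theorem norm_le_norm_of_nonneg_of_le {E : Type*} [NormedAddCommGroup E] [Lattice E]
    [IsOrderedAddMonoid E] [HasSolidNorm E] {a b : E} (ha : 0 ≤ a) (hab : a ≤ b) :
    ‖a‖ ≤ ‖b‖ :=
  norm_le_norm_of_abs_le_abs (by rwa [abs_of_nonneg ha, abs_of_nonneg (ha.trans hab)])

section Averages

variable {d : ℕ} {E : Type*} [NormedAddCommGroup E] (μ : Measure (Fin d → ℝ))

theorem avg_norm_nonneg (A : Set (Fin d → ℝ)) (f : (Fin d → ℝ) → E) :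
    0 ≤ avg μ A fun y => ‖f y‖ :=
  smul_nonneg (inv_nonneg.2 ENNReal.toReal_nonneg) (integral_nonneg fun y => norm_nonneg (f y))

theorem norm_avg_le [NormedSpace ℝ E] (A : Set (Fin d → ℝ)) (f : (Fin d → ℝ) → E) :
    ‖avg μ A f‖ ≤ avg μ A fun y => ‖f y‖ := by
  rw [avg, avg, norm_smul, Real.norm_of_nonneg (inv_nonneg.2 ENNReal.toReal_nonneg)]
  exact mul_le_mul_of_nonneg_left (norm_integral_le_integral_norm _)
    (inv_nonneg.2 ENNReal.toReal_nonneg)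

theorem avg_of_measure_eq_zero [NormedSpace ℝ E] {A : Set (Fin d → ℝ)} (hA : μ A = 0)
    (f : (Fin d → ℝ) → E) : avg μ A f = 0 := by
  simp [avg, hA]

theorem avg_indicator_const [NormedSpace ℝ E] [CompleteSpace E] {A : Set (Fin d → ℝ)}
    (hA : MeasurableSet A) (h0 : μ A ≠ 0) (htop : μ A ≠ ⊤) (e : E) :
    avg μ A (A.indicator fun _ => e) = e := by
  rw [avg, setIntegral_indicator hA, inter_self, setIntegral_const, measureReal_def, smul_smul,
    inv_mul_cancel₀ (ENNReal.toReal_ne_zero.2 ⟨h0, htop⟩), one_smul]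

end Averages

section MaximalOperator

variable {d : ℕ} {E : Type*} [NormedAddCommGroup E] [Lattice E] [IsOrderedAddMonoid E]
  [HasSolidNorm E] [NormedSpace ℝ E] (μ : Measure (Fin d → ℝ)) (D : Finset (DyadicCube d))

variable (E) in
/-- `K` bounds `M̃^μ_D : L¹(μ;E) → L^{1,∞}(μ;E)`. -/
def IsWeakTypeBoundDyadicMaximal (K : ℝ) : Prop :=
  ∀ g : (Fin d → ℝ) → E, Integrable g μ → ∀ lam : ℝ, 0 < lam →
    ENNReal.ofReal lam * μ {x | lam < ‖dyadicMaximal μ D g x‖} ≤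
      ENNReal.ofReal K * ∫⁻ x, ‖g x‖₊ ∂μ

theorem indicator_avg_le_dyadicMaximal (g : (Fin d → ℝ) → E) (x : Fin d → ℝ)
    {Q : DyadicCube d} (hQ : Q ∈ D) :
    Q.set.indicator (fun _ => avg μ Q.set fun y => |g y|) x ≤ dyadicMaximal μ D g x :=
  Finset.le_fold_sup (f := fun R => R.set.indicator (fun _ => avg μ R.set fun y => |g y|) x) hQ

/-- Test the weak-type bound on `g = e 1_Q` with `e ≥ 0`, for which `M̃^μ_D g ≥ e` on `Q`. -/
theorem one_le_of_weakType_dyadicMaximal [CompleteSpace E] [Nontrivial E]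
    [IsLocallyFiniteMeasure μ] {K : ℝ}
    (hK : IsWeakTypeBoundDyadicMaximal E μ D K)
    {Q : DyadicCube d} (hQ : Q ∈ D) (hμQ : μ Q.set ≠ 0) : 1 ≤ K := by
  obtain ⟨e₀, he₀⟩ := exists_ne (0 : E)
  set e := |e₀|
  have he : 0 < ‖e‖ := by rw [norm_abs_eq_norm]; exact norm_pos_iff.2 he₀
  have hμQ_top := (Q.measure_set_lt_top μ).ne
  set g := Q.set.indicator fun _ => e
  have hg_int : Integrable g μ :=
    (integrable_indicator_iff Q.measurableSet_set).2 (integrableOn_const hμQ_top)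
  have hg_abs : (fun y => |g y|) = g :=
    funext fun y => abs_of_nonneg (indicator_nonneg (fun _ _ => abs_nonneg e₀) y)
  have hMg : ∀ x ∈ Q.set, ‖e‖ ≤ ‖dyadicMaximal μ D g x‖ := fun x hx => by
    have := indicator_avg_le_dyadicMaximal μ D g x hQ
    rw [hg_abs, indicator_of_mem hx,
      avg_indicator_const μ Q.measurableSet_set hμQ hμQ_top] at this
    exact norm_le_norm_of_nonneg_of_le (abs_nonneg e₀) this
  have hg_lintegral : ∫⁻ x, ‖g x‖₊ ∂μ = ‖e‖ₑ * μ Q.set := by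
    simp only [g, ← enorm_eq_nnnorm, enorm_indicator_eq_indicator_enorm,
      lintegral_indicator_const Q.measurableSet_set]
  have key : ∀ lam, 0 < lam → lam < ‖e‖ → lam ≤ K * ‖e‖ := fun lam hlam hlam_lt => by
    have : ENNReal.ofReal lam * μ Q.set ≤ ENNReal.ofReal (K * ‖e‖) * μ Q.set :=
      calc ENNReal.ofReal lam * μ Q.set
          ≤ ENNReal.ofReal lam * μ {x | lam < ‖dyadicMaximal μ D g x‖} :=
            by gcongr; exact fun x hx => hlam_lt.trans_le (hMg x hx)
        _ ≤ ENNReal.ofReal K * ∫⁻ x, ‖g x‖₊ ∂μ := hK g hg_int lam hlam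
        _ = ENNReal.ofReal (K * ‖e‖) * μ Q.set := by
          rw [hg_lintegral, ENNReal.ofReal_mul' (norm_nonneg e), ofReal_norm, mul_assoc]
    exact (ENNReal.ofReal_le_ofReal_iff'.1
      ((ENNReal.mul_le_mul_iff_left hμQ hμQ_top).1 this)).resolve_right hlam.not_ge
  by_contra! hK1
  obtain ⟨lam, hlam, hlam_lt⟩ := exists_between (max_lt (mul_lt_of_lt_one_left he hK1) he)
  exact (max_lt_iff.1 hlam).1.not_ge (key lam ((le_max_right _ _).trans_lt hlam) hlam_lt)

theorem avg_norm_le_mul_avg_norm_of_weakType [CompleteSpace E] [IsLocallyFiniteMeasure μ] {K : ℝ}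
    (hK : IsWeakTypeBoundDyadicMaximal E μ D K)
    {S : DyadicCube d} (hS : S ∈ D) (f : (Fin d → ℝ) → E) :
    (avg μ S.set fun y => ‖f y‖) ≤ K * avg μ S.set fun y => ‖f y‖ := by
  rcases subsingleton_or_nontrivial E with hE | hE
  · simp [Subsingleton.elim _ (0 : E), avg]
  by_cases hμS : μ S.set = 0
  · simp [avg_of_measure_eq_zero μ hμS]
  exact le_mul_of_one_le_left (avg_norm_nonneg μ S.set f)
    (one_le_of_weakType_dyadicMaximal μ D hK hS hμS)

end MaximalOperator

section Stopping

variable {d : ℕ} {E : Type*} [NormedAddCommGroup E] [Lattice E] [IsOrderedAddMonoid E]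
  [HasSolidNorm E] [NormedSpace ℝ E] {μ : Measure (Fin d → ℝ)} {D : Finset (DyadicCube d)}
  {f : (Fin d → ℝ) → E} {K : ℝ}

theorem isStopParent_self {𝒮 : Finset (DyadicCube d)} {S : DyadicCube d} (hS : S ∈ 𝒮) :
    IsStopParent 𝒮 S S :=
  ⟨hS, subset_rfl, fun _ _ => id⟩

theorem mem_stopFamily_of_mem_stopChildren {S R : DyadicCube d}
    (hS : S ∈ stopFamily μ D f K) (hR : R ∈ stopChildren μ D f K S) :
    R ∈ stopFamily μ D f K := by
  obtain ⟨-, k, hk⟩ := Finset.mem_filter.1 hS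
  exact Finset.mem_filter.2 ⟨(Finset.mem_filter.1 hR).1, k + 1, Finset.mem_biUnion.2 ⟨S, hk, hR⟩⟩

/-- The stopping child is a stopping cube of maximal generation containing `Q`. -/
theorem exists_mem_stopChildren_superset (hd : 1 ≤ d) {Q S : DyadicCube d} (hQ : Q ∈ D)
    (hQS : Q.set ⊂ S.set) (hstop : StopCond μ D f K Q S) :
    ∃ R ∈ stopChildren μ D f K S, Q.set ⊆ R.set := by
  set A := D.filter fun R => R.set ⊂ S.set ∧ StopCond μ D f K R S ∧ Q.set ⊆ R.set
  obtain ⟨R, hRA, hRmax⟩ := A.exists_max_image DyadicCube.k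
    ⟨Q, Finset.mem_filter.2 ⟨hQ, hQS, hstop, subset_rfl⟩⟩
  obtain ⟨hRD, hRS, hRstop, hQR⟩ := Finset.mem_filter.1 hRA
  refine ⟨R, Finset.mem_filter.2 ⟨hRD, hRS, hRstop, fun R' hR'D hR'S hR'stop hRR' => ?_⟩, hQR⟩
  have hk := hRmax R' (Finset.mem_filter.2 ⟨hR'D, hR'S, hR'stop, hQR.trans hRR'⟩)
  exact DyadicCube.set_injective hd <| (DyadicCube.set_subset_of_k_le
    (hRR' R.corner_mem_set) R.corner_mem_set hk).antisymm hRR'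

theorem norm_supAvgOver_le_of_forall_set_eq {P : DyadicCube d → Prop} {S : DyadicCube d}
    (hP : ∀ Q, P Q → Q.set = S.set) :
    ‖supAvgOver μ D f P‖ ≤ avg μ S.set fun y => ‖f y‖ := by
  have hle : supAvgOver μ D f P ≤ |avg μ S.set f| :=
    Finset.fold_sup_le_iff.2 ⟨abs_nonneg _, fun Q hQ => by
      rw [hP Q (Finset.mem_filter.1 hQ).2]
      exact le_abs_self _⟩
  calc ‖supAvgOver μ D f P‖ ≤ ‖|avg μ S.set f|‖ :=
        norm_le_norm_of_nonneg_of_le Finset.init_le_fold_sup hle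
    _ = ‖avg μ S.set f‖ := norm_abs_eq_norm _
    _ ≤ avg μ S.set fun y => ‖f y‖ := norm_avg_le μ S.set f

theorem not_stopCond_of_isStopParent [CompleteSpace E] [IsLocallyFiniteMeasure μ] (hd : 1 ≤ d)
    (hK : IsWeakTypeBoundDyadicMaximal E μ D K)
    {Q S : DyadicCube d} (hQ : Q ∈ D) (hpar : IsStopParent (stopFamily μ D f K) Q S) :
    ¬ StopCond μ D f K Q S := by
  obtain ⟨hS, hQS, hmin⟩ := hpar
  intro hstop
  rcases hQS.eq_or_ssubset with heq | hQS
  · have hsup := norm_supAvgOver_le_of_forall_set_eq (μ := μ) (D := D) (f := f)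
      (P := fun R => Q.set ⊆ R.set ∧ R.set ⊆ S.set) fun R hR => hR.2.antisymm (heq ▸ hR.1)
    have hK1 := avg_norm_le_mul_avg_norm_of_weakType μ D hK (Finset.mem_filter.1 hS).1 f
    have := avg_norm_nonneg μ S.set f
    unfold StopCond at hstop
    nlinarith
  · obtain ⟨R, hR, hQR⟩ := exists_mem_stopChildren_superset hd hQ hQS hstop
    exact (Finset.mem_filter.1 hR).2.1.not_subset
      (hmin R (mem_stopFamily_of_mem_stopChildren hS hR) hQR)

theorem supIndAvgOver_eq_zero {P : DyadicCube d → Prop} {x : Fin d → ℝ}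
    (h : ∀ Q ∈ D, P Q → x ∉ Q.set) : supIndAvgOver μ D f P x = 0 :=
  (Finset.fold_sup_le_iff.2 ⟨le_rfl, fun Q hQ => by
    rw [indicator_of_notMem (h Q (Finset.mem_filter.1 hQ).1 (Finset.mem_filter.1 hQ).2)]⟩).antisymm
    Finset.init_le_fold_sup

theorem norm_supIndAvgOver_le {P P' : DyadicCube d → Prop} {x : Fin d → ℝ}
    (h : ∀ Q ∈ D, P Q → x ∈ Q.set → P' Q) :
    ‖supIndAvgOver μ D f P x‖ ≤ ‖supAvgOver μ D f P'‖ := by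
  refine norm_le_norm_of_nonneg_of_le Finset.init_le_fold_sup
    (Finset.fold_sup_le_iff.2 ⟨Finset.init_le_fold_sup, fun Q hQ => ?_⟩)
  obtain ⟨hQD, hPQ⟩ := Finset.mem_filter.1 hQ
  by_cases hx : x ∈ Q.set
  · rw [indicator_of_mem hx]
    exact Finset.le_fold_sup (f := fun Q => avg μ Q.set f)
      (Finset.mem_filter.2 ⟨hQD, h Q hQD hPQ hx⟩)
  · rw [indicator_of_notMem hx]
    exact Finset.init_le_fold_sup

end Stopping

theorem stopFamily_pointwise_estimate_general
    {d : ℕ} (hd : 1 ≤ d)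
    (E : Type*) [NormedAddCommGroup E] [Lattice E] [IsOrderedAddMonoid E] [HasSolidNorm E] [NormedSpace ℝ E] [CompleteSpace E]
    (μ : Measure (Fin d → ℝ)) [IsLocallyFiniteMeasure μ]
    (D : Finset (DyadicCube d)) (f : (Fin d → ℝ) → E)
    (K : ℝ)
    (hKweak : ∀ g : (Fin d → ℝ) → E, Integrable g μ → ∀ lam : ℝ, 0 < lam →
      ENNReal.ofReal lam * μ {x | lam < ‖dyadicMaximal μ D g x‖} ≤
        ENNReal.ofReal K * ∫⁻ x, ‖g x‖₊ ∂μ) :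
    ∀ S ∈ stopFamily μ D f K, ∀ x : Fin d → ℝ,
      ‖supIndAvgOver μ D f (fun Q => IsStopParent (stopFamily μ D f K) Q S) x‖ ≤
        2 * K * Set.indicator S.set (fun _ => avg μ S.set fun y => ‖f y‖) x := by
  intro S hS x
  by_cases hxS : x ∈ S.set
  swap
  · rw [indicator_of_notMem hxS, mul_zero,
      supIndAvgOver_eq_zero fun Q _ hpar hxQ => hxS (hpar.2.1 hxQ), norm_zero]
  obtain ⟨Q₀, hQ₀, hQ₀_min⟩ :=
    (D.filter fun Q => IsStopParent (stopFamily μ D f K) Q S ∧ x ∈ Q.set).exists_min_image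
      DyadicCube.k ⟨S, by simp [(Finset.mem_filter.1 hS).1, isStopParent_self hS, hxS]⟩
  simp only [Finset.mem_filter] at hQ₀ hQ₀_min
  obtain ⟨hQ₀D, hQ₀S, hxQ₀⟩ := hQ₀
  calc _ ≤ ‖supAvgOver μ D f fun Q => Q₀.set ⊆ Q.set ∧ Q.set ⊆ S.set‖ :=
        norm_supIndAvgOver_le fun Q hQ hQS hxQ =>
          ⟨DyadicCube.set_subset_of_k_le hxQ₀ hxQ (hQ₀_min Q ⟨hQ, hQS, hxQ⟩), hQS.2.1⟩
    _ ≤ 2 * K * avg μ S.set fun y => ‖f y‖ :=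
        not_lt.1 (not_stopCond_of_isStopParent hd hKweak hQ₀D hQ₀S)
    _ = _ := by rw [indicator_of_mem hxS]

/-- from the proof of Theorem 1.4: the pointwise estimate (4.2) /
`eq:pointwise`. With `K` the `L^1(μ;E) → L^{1,∞}(μ;E)` norm of `M̃^μ_D` and
`𝒮 = stopFamily μ D f K` the stopping family, for every `S ∈ 𝒮` and every `x`:
`‖sup_{Q ∈ D, π_𝒮(Q) = S} ⟨f⟩^μ_Q 1_Q(x)‖ ≤ 2K ⟨‖f‖⟩^μ_S 1_S(x)`. -/
theorem stopFamily_pointwise_estimate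
    {d : ℕ} (hd : 1 ≤ d)
    (E : Type*) [NormedAddCommGroup E] [Lattice E] [IsOrderedAddMonoid E] [HasSolidNorm E] [NormedSpace ℝ E] [CompleteSpace E]
    (μ : Measure (Fin d → ℝ)) [IsLocallyFiniteMeasure μ]
    (D : Finset (DyadicCube d)) (f : (Fin d → ℝ) → E)
    (hfpos : ∀ x, 0 ≤ f x) (hf : LocallyIntegrable f μ)
    (K : ℝ) (hK0 : 0 ≤ K)
    (hKweak : ∀ g : (Fin d → ℝ) → E, Integrable g μ → ∀ lam : ℝ, 0 < lam →
      ENNReal.ofReal lam * μ {x | lam < ‖dyadicMaximal μ D g x‖} ≤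
        ENNReal.ofReal K * ∫⁻ x, ‖g x‖₊ ∂μ)
    (hKmin : ∀ K' : ℝ, 0 ≤ K' →
      (∀ g : (Fin d → ℝ) → E, Integrable g μ → ∀ lam : ℝ, 0 < lam →
        ENNReal.ofReal lam * μ {x | lam < ‖dyadicMaximal μ D g x‖} ≤
          ENNReal.ofReal K' * ∫⁻ x, ‖g x‖₊ ∂μ) → K ≤ K') :
    ∀ S ∈ stopFamily μ D f K, ∀ x : Fin d → ℝ,
      ‖supIndAvgOver μ D f (fun Q => IsStopParent (stopFamily μ D f K) Q S) x‖ ≤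
        2 * K * Set.indicator S.set (fun _ => avg μ S.set fun y => ‖f y‖) x :=
  stopFamily_pointwise_estimate_general hd E μ D f K hKweak
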